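/- On the linear subspace of vectors Q ∈ ℝ^d whose terminal components satisfy Q_N(i,a) = 0 for all (i,a), the origin is the unique solution of h_∞(Q) = 0: h_∞(0) = 0, and if Q satisfies Q_N(i,a) = 0 for all (i,a) and h_∞(Q) = 0, then Q = 0. -/

import Mathlib

open Finset

noncomputable section

/-- The limiting finite-horizon Q-learning vector field `h_∞`. -/
def hinf {S A : Type*} [Fintype S] [Fintype A] [Nonempty A] (N : ℕ)
    (p : ℕ → S → A → S → ℝ)
    (Q : Fin (N + 1) × S × A → ℝ) : Fin (N + 1) × S × A → ℝ :=
  fun x =>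
    if h : (x.1 : ℕ) < N then
      (∑ j, p x.1 x.2.1 x.2.2 j * ⨅ b : A, Q (⟨(x.1 : ℕ) + 1, by omega⟩, j, b))
        - Q x
    else 0

section

variable {S A : Type*} [Fintype S] [Fintype A] [Nonempty A] {N : ℕ}
  (p : ℕ → S → A → S → ℝ)

theorem hinf_zero : hinf N p 0 = 0 := by
  funext x
  simp [hinf]

theorem hinf_castSucc (Q : Fin (N + 1) × S × A → ℝ) (k : Fin N) (i : S) (a : A) :
    hinf N p Q (k.castSucc, i, a) =
      (∑ j, p k i a j * ⨅ b, Q (k.succ, j, b)) - Q (k.castSucc, i, a) := by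
  simp only [hinf, Fin.val_castSucc, k.is_lt, dite_true]
  rfl

theorem apply_castSucc_eq_of_hinf_eq_zero {Q : Fin (N + 1) × S × A → ℝ}
    (hQ : hinf N p Q = 0) (k : Fin N) (i : S) (a : A) :
    Q (k.castSucc, i, a) = ∑ j, p k i a j * ⨅ b, Q (k.succ, j, b) := by
  have := congrFun hQ (k.castSucc, i, a)
  rw [hinf_castSucc, Pi.zero_apply, sub_eq_zero] at this
  exact this.symm

end

theorem origin_unique_equilibrium_hinf_general {S A : Type*} [Fintype S]
    [Fintype A] [Nonempty A]
    (N : ℕ)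
    (p : ℕ → S → A → S → ℝ) :
    hinf N p 0 = 0 ∧
      ∀ Q : Fin (N + 1) × S × A → ℝ,
        (∀ (i : S) (a : A), Q (Fin.last N, i, a) = 0) →
        hinf N p Q = 0 → Q = 0 := by
  refine ⟨hinf_zero p, fun Q hterm hQ => ?_⟩
  suffices ∀ n i a, Q (n, i, a) = 0 from funext fun ⟨n, i, a⟩ => this n i a
  intro n
  induction n using Fin.reverseInduction with
  | last => exact hterm
  | cast k ih =>
    intro i a
    simp [apply_castSucc_eq_of_hinf_eq_zero p hQ, ih]

/-- on the linear subspace of vectors whose terminal components vanish,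
the origin is the unique zero of `h_∞`. -/
theorem origin_unique_equilibrium_hinf {S A : Type*} [Fintype S] [Nonempty S]
    [Fintype A] [Nonempty A]
    (N : ℕ) (hN : 1 ≤ N)
    (p : ℕ → S → A → S → ℝ)
    (hp0 : ∀ n < N, ∀ i a j, 0 ≤ p n i a j)
    (hp1 : ∀ n < N, ∀ i a, ∑ j, p n i a j = 1) :
    hinf N p 0 = 0 ∧
      ∀ Q : Fin (N + 1) × S × A → ℝ,
        (∀ (i : S) (a : A), Q (Fin.last N, i, a) = 0) →
        hinf N p Q = 0 → Q = 0 :=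
  origin_unique_equilibrium_hinf_general N p

end
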